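/- For all natural numbers M, n ≥ 0, the following identity holds in ℚ⟦q⟧: 1/((q;q)_{M+n}(q;q)_n) = Σ_{k=0}^{n} q^{k²+Mk}/((q;q)_{n−k}(q;q)_{k+M}(q;q)_k). -/

import Mathlib

/- Common setup: work in the ring of formal power series ℚ⟦q⟧.
Infinite sums/products are taken coefficientwise: this agrees with convergence
in the q-adic topology, since in each case the coefficient of q^N only receives
finitely many nonzero contributions. -/

open PowerSeries

noncomputable section

/-- The formal variable `q`. -/
abbrev q : PowerSeries ℚ := PowerSeries.X

/-- The finite q-Pochhammer symbol `(q^a; q)_n = ∏_{k=0}^{n-1} (1 - q^{a+k})`. -/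
def qPoch (a n : ℕ) : PowerSeries ℚ := ∏ k ∈ Finset.range n, (1 - q ^ (a + k))

/-- The infinite q-Pochhammer symbol `(q^a; q)_∞ = ∏_{k≥0} (1 - q^{a+k})` (for `a ≥ 1`),
defined coefficientwise: the coefficient of `q^N` in the partial products stabilizes
once at least `N+1` factors are taken. -/
def qPochInf (a : ℕ) : PowerSeries ℚ :=
  PowerSeries.mk fun N => PowerSeries.coeff N (qPoch a (N + 1))

/-- The coefficientwise (q-adic) sum of a family of formal power series: the coefficient
of `q^N` of the sum is the (finitely supported) sum of the `q^N`-coefficients. -/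
def qSum {ι : Type*} (f : ι → PowerSeries ℚ) : PowerSeries ℚ :=
  PowerSeries.mk fun N => ∑ᶠ i, PowerSeries.coeff N (f i)

/-- `Φ₁ = Σ_{n≥1} n q^n/(1-q^n)` (the `n = 0` summand vanishes). -/
def Phi1 : PowerSeries ℚ :=
  qSum fun n : ℕ => (n : PowerSeries ℚ) * q ^ n * (1 - q ^ n)⁻¹

/-! Clearing denominators with `(q;q)_n = [n, k]_q (q;q)_k (q;q)_{n-k}` and
`(q;q)_{M+n} = (q;q)_{k+M} (q^{M+k+1};q)_{n-k}` turns the identity into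
`Σ_k q^{k²+Mk} [n, k]_q (q^{M+k+1};q)_{n-k} = 1`, which holds in every commutative ring.
Splitting `[n+1, k]_q` by q-Pascal and peeling the factor `1 - q^{M+k+1}` off the Pochhammer
symbol shows that the left side for `(M, n + 1)` equals the one for `(M + 1, n)`, so it is
constant in `n` and equals its value `1` at `n = 0`. -/

open Finset

section QAnalogues

variable {R : Type*} [CommRing R] (x : R)

def qPochhammer (a n : ℕ) : R := ∏ k ∈ range n, (1 - x ^ (a + k))

@[simp]
lemma qPochhammer_zero (a : ℕ) : qPochhammer x a 0 = 1 := prod_range_zero _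

lemma qPochhammer_succ (a n : ℕ) :
    qPochhammer x a (n + 1) = qPochhammer x a n * (1 - x ^ (a + n)) :=
  prod_range_succ _ _

lemma qPochhammer_succ' (a n : ℕ) :
    qPochhammer x a (n + 1) = (1 - x ^ a) * qPochhammer x (a + 1) n := by
  simp only [qPochhammer, prod_range_succ', add_zero, add_right_comm a, add_assoc, mul_comm]

lemma qPochhammer_add (a m n : ℕ) :
    qPochhammer x a (m + n) = qPochhammer x a m * qPochhammer x (a + m) n := by
  simp only [qPochhammer, prod_range_add, add_assoc]

def qBinomial : ℕ → ℕ → R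
  | _, 0 => 1
  | 0, _ + 1 => 0
  | n + 1, k + 1 => x ^ (k + 1) * qBinomial n (k + 1) + qBinomial n k

@[simp]
lemma qBinomial_zero_right (n : ℕ) : qBinomial x n 0 = 1 := by cases n <;> rfl

lemma qBinomial_succ_succ (n k : ℕ) :
    qBinomial x (n + 1) (k + 1) = x ^ (k + 1) * qBinomial x n (k + 1) + qBinomial x n k := rfl

lemma qBinomial_eq_zero_of_lt {n k : ℕ} (h : n < k) : qBinomial x n k = 0 := by
  induction n generalizing k with
  | zero => obtain ⟨k, rfl⟩ := Nat.exists_eq_add_of_lt h; rfl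
  | succ n ih =>
    obtain ⟨k, rfl⟩ := Nat.exists_eq_add_of_lt (Nat.zero_lt_of_lt h)
    rw [qBinomial_succ_succ, ih (by omega), ih (by omega), mul_zero, add_zero]

lemma qBinomial_mul_qPochhammer_mul_qPochhammer {n k : ℕ} (h : k ≤ n) :
    qBinomial x n k * (qPochhammer x 1 k * qPochhammer x 1 (n - k)) = qPochhammer x 1 n := by
  induction n generalizing k with
  | zero => obtain rfl := Nat.le_zero.mp h; simp
  | succ n ih =>
    cases k with
    | zero => simp
    | succ k =>
      have hlow : qBinomial x n k * (qPochhammer x 1 (k + 1) * qPochhammer x 1 (n - k)) =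
          (1 - x ^ (k + 1)) * qPochhammer x 1 n := by
        rw [← ih (by omega : k ≤ n), qPochhammer_succ, add_comm 1 k]
        ring
      have hhigh : x ^ (k + 1) * qBinomial x n (k + 1) *
          (qPochhammer x 1 (k + 1) * qPochhammer x 1 (n - k)) =
          x ^ (k + 1) * (1 - x ^ (n - k)) * qPochhammer x 1 n := by
        rcases (Nat.lt_succ_iff.mp h).lt_or_eq with hk | rfl
        · obtain ⟨m, hm⟩ : ∃ m, n - k = m + 1 := ⟨n - (k + 1), by omega⟩
          rw [hm, qPochhammer_succ x 1 m, ← ih hk, show n - (k + 1) = m by omega, add_comm 1 m]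
          ring
        · rw [qBinomial_eq_zero_of_lt x (Nat.lt_succ_self k)]
          simp
      have hpow : x ^ (k + 1) * x ^ (n - k) = x ^ (n + 1) := by
        rw [← pow_add]; congr 1; omega
      rw [Nat.add_sub_add_right, qBinomial_succ_succ, add_mul, hhigh, hlow, qPochhammer_succ,
        add_comm 1 n]
      linear_combination (-qPochhammer x 1 n) * hpow

-- Both sides vanish when `k ≥ n`, so the lemma sidesteps the truncated subtraction `n - k`.
lemma qBinomial_succ_mul_qPochhammer (n k a : ℕ) :
    qBinomial x n (k + 1) * qPochhammer x a (n - k) =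
      qBinomial x n (k + 1) * ((1 - x ^ a) * qPochhammer x (a + 1) (n - (k + 1))) := by
  rcases lt_or_ge k n with hk | hk
  · rw [show n - k = n - (k + 1) + 1 by omega, qPochhammer_succ']
  · rw [qBinomial_eq_zero_of_lt x (by omega), zero_mul, zero_mul]

-- The `k`-th summand of the identity after multiplying by `(q;q)_n (q;q)_{M+n}`.
def durfeeTerm (M n k : ℕ) : R :=
  x ^ (k ^ 2 + M * k) * qBinomial x n k * qPochhammer x (M + k + 1) (n - k)

lemma durfeeTerm_succ_zero (M n : ℕ) :
    durfeeTerm x M (n + 1) 0 = (1 - x ^ (M + 1)) * durfeeTerm x (M + 1) n 0 := by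
  simp [durfeeTerm, qPochhammer_succ']

lemma durfeeTerm_succ_succ (M n k : ℕ) :
    durfeeTerm x M (n + 1) (k + 1) =
      (1 - x ^ (M + k + 2)) * durfeeTerm x (M + 1) n (k + 1) +
        x ^ (M + k + 1) * durfeeTerm x (M + 1) n k := by
  simp only [durfeeTerm, qBinomial_succ_succ, Nat.add_sub_add_right]
  rw [show M + (k + 1) + 1 = M + k + 2 by omega, show M + 1 + (k + 1) + 1 = M + k + 2 + 1 by omega,
    show M + 1 + k + 1 = M + k + 2 by omega]
  linear_combination x ^ ((k + 1) ^ 2 + M * (k + 1) + k + 1) *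
    qBinomial_succ_mul_qPochhammer x n k (M + k + 2)

lemma sum_durfeeTerm_succ (M n : ℕ) :
    ∑ k ∈ range (n + 2), durfeeTerm x M (n + 1) k =
      ∑ k ∈ range (n + 1), durfeeTerm x (M + 1) n k := by
  set D := durfeeTerm x (M + 1) n
  set c := fun k ↦ x ^ (M + k + 1) * D k
  have hD : D (n + 1) = 0 := by simp [D, durfeeTerm, qBinomial_eq_zero_of_lt]
  calc ∑ k ∈ range (n + 2), durfeeTerm x M (n + 1) k
      = ∑ k ∈ range (n + 1), (D (k + 1) - c (k + 1) + c k) + (D 0 - c 0) := by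
        rw [sum_range_succ', durfeeTerm_succ_zero]
        congr 1
        · exact sum_congr rfl fun k _ ↦ by rw [durfeeTerm_succ_succ]; ring
        · ring
    _ = ∑ k ∈ range (n + 2), D k - ∑ k ∈ range (n + 2), c k + ∑ k ∈ range (n + 1), c k := by
        rw [sum_range_succ' D, sum_range_succ' c, sum_add_distrib, sum_sub_distrib]
        ring
    _ = ∑ k ∈ range (n + 1), D k := by
        rw [sum_range_succ D, sum_range_succ c, hD]
        simp only [c, hD]
        ring

theorem sum_durfeeTerm (M n : ℕ) : ∑ k ∈ range (n + 1), durfeeTerm x M n k = 1 := by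
  induction n generalizing M with
  | zero => simp [durfeeTerm]
  | succ n ih => rw [sum_durfeeTerm_succ, ih]

end QAnalogues

lemma qPoch_eq_qPochhammer (a n : ℕ) : qPoch a n = qPochhammer q a n := rfl

lemma constantCoeff_qPoch {a : ℕ} (ha : 0 < a) (n : ℕ) : constantCoeff (qPoch a n) = 1 := by
  simp [qPoch, map_prod, ha.ne']

lemma qPoch_mul_inv {a : ℕ} (ha : 0 < a) (n : ℕ) : qPoch a n * (qPoch a n)⁻¹ = 1 :=
  PowerSeries.mul_inv_cancel _ (by simp [constantCoeff_qPoch ha])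

lemma durfeeTerm_q_eq {M n k : ℕ} (h : k ≤ n) :
    durfeeTerm q M n k = q ^ (k ^ 2 + M * k) *
      ((qPoch 1 (n - k))⁻¹ * (qPoch 1 (k + M))⁻¹ * (qPoch 1 k)⁻¹) *
        (qPoch 1 n * qPoch 1 (M + n)) := by
  have hn : qPoch 1 n = qBinomial q n k * (qPoch 1 k * qPoch 1 (n - k)) :=
    (qBinomial_mul_qPochhammer_mul_qPochhammer q h).symm
  have hMn : qPoch 1 (M + n) = qPoch 1 (k + M) * qPochhammer q (M + k + 1) (n - k) := by
    rw [qPoch_eq_qPochhammer, qPoch_eq_qPochhammer, show M + k + 1 = 1 + (k + M) by omega,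
      ← qPochhammer_add, show k + M + (n - k) = M + n by omega]
  have hcancel : qPoch 1 (n - k) * (qPoch 1 (n - k))⁻¹ * (qPoch 1 (k + M) * (qPoch 1 (k + M))⁻¹) *
      (qPoch 1 k * (qPoch 1 k)⁻¹) = 1 := by
    simp only [qPoch_mul_inv one_pos, mul_one]
  rw [hn, hMn, durfeeTerm]
  linear_combination (-q ^ (k ^ 2 + M * k) * qBinomial q n k * qPochhammer q (M + k + 1) (n - k)) *
    hcancel

/-- Equation (3.6): for all `M, n ≥ 0`,
`1/((q;q)_{M+n}(q;q)_n) = Σ_{k=0}^{n} q^{k²+Mk}/((q;q)_{n-k}(q;q)_{k+M}(q;q)_k)`. -/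
theorem patkowski_eq_3_6 (M n : ℕ) :
    (qPoch 1 (M + n))⁻¹ * (qPoch 1 n)⁻¹ =
      ∑ k ∈ Finset.range (n + 1), q ^ (k ^ 2 + M * k) *
        ((qPoch 1 (n - k))⁻¹ * (qPoch 1 (k + M))⁻¹ * (qPoch 1 k)⁻¹) := by
  rw [← PowerSeries.mul_inv_rev, PowerSeries.inv_eq_iff_mul_eq_one (by simp [constantCoeff_qPoch]),
    ← sum_durfeeTerm q M n, sum_mul]
  exact sum_congr rfl fun k hk ↦ (durfeeTerm_q_eq (Nat.lt_succ_iff.mp (mem_range.mp hk))).symm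

end
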